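/- arXiv:0804.1399 — 7 statements merged into one kernel-verified Lean document; each statement's English description precedes it below -/
import Mathlib

section
/- Let 0 < ε < 1/2. The function μ ↦ g(ε, μ) is monotonically increasing on (0, 1/2 - ε) and monotonically decreasing on (1/2, 1 - ε). -/
/-! On `(0, 1 - ε)` the function is `μ ↦ H (μ + ε) - H μ - ε H' μ`, the gap at `μ + ε` between the
binary entropy `H` and its tangent line at `μ`. Its derivative `H' (μ + ε) - H' μ - ε H'' μ` is `ε`
times the excess of the slope of `H'` over `[μ, μ + ε]` on `H'' μ`, so it is positive where `H'` is
strictly convex and negative where `H'` is strictly concave. As `H'' μ = -1 / (μ (1 - μ))`, `H'` is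
strictly convex on `(0, 1/2]` and strictly concave on `[1/2, 1)`. -/

open Real Set

def tangentGap (f f' : ℝ → ℝ) (ε x : ℝ) : ℝ := f (x + ε) - f x - ε * f' x

section TangentGap

variable {f f' f'' : ℝ → ℝ} {a b ε : ℝ}

theorem hasDerivAt_tangentGap {x : ℝ} (hx : HasDerivAt f (f' x) x)
    (hxε : HasDerivAt f (f' (x + ε)) (x + ε)) (hx' : HasDerivAt f' (f'' x) x) :
    HasDerivAt (tangentGap f f' ε) (f' (x + ε) - f' x - ε * f'' x) x :=
  ((hxε.comp_add_const x ε).sub hx).sub (hx'.const_mul ε)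

theorem StrictConvexOn.strictMonoOn_tangentGap (hε : 0 < ε)
    (hf : ∀ x ∈ Ioo a b, HasDerivAt f (f' x) x) (hf' : ∀ x ∈ Ioo a b, HasDerivAt f' (f'' x) x)
    (hconv : StrictConvexOn ℝ (Ioo a b) f') :
    StrictMonoOn (tangentGap f f' ε) (Ioo a (b - ε)) := by
  have hmem : ∀ x ∈ Ioo a (b - ε), x ∈ Ioo a b ∧ x + ε ∈ Ioo a b := fun x ⟨hax, hxb⟩ =>
    ⟨⟨hax, by linarith⟩, ⟨by linarith, by linarith⟩⟩
  have hderiv : ∀ x ∈ Ioo a (b - ε),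
      HasDerivAt (tangentGap f f' ε) (f' (x + ε) - f' x - ε * f'' x) x := fun x hx =>
    hasDerivAt_tangentGap (hf x (hmem x hx).1) (hf _ (hmem x hx).2) (hf' x (hmem x hx).1)
  refine strictMonoOn_of_hasDerivWithinAt_pos (convex_Ioo _ _)
    (fun x hx => (hderiv x hx).continuousAt.continuousWithinAt)
    (fun x hx => (hderiv x (interior_subset hx)).hasDerivWithinAt) fun x hx => ?_
  rw [interior_Ioo] at hx
  have hslope := hconv.lt_slope_of_hasDerivAt (hmem x hx).1 (hmem x hx).2 (by linarith)
    (hf' x (hmem x hx).1)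
  rw [slope_def_field, add_sub_cancel_left, lt_div_iff₀ hε] at hslope
  linarith

theorem StrictConcaveOn.strictAntiOn_tangentGap (hε : 0 < ε)
    (hf : ∀ x ∈ Ioo a b, HasDerivAt f (f' x) x) (hf' : ∀ x ∈ Ioo a b, HasDerivAt f' (f'' x) x)
    (hconc : StrictConcaveOn ℝ (Ioo a b) f') :
    StrictAntiOn (tangentGap f f' ε) (Ioo a (b - ε)) := by
  have h := hconc.neg.strictMonoOn_tangentGap hε (f := -f) (f'' := -f'')
    (fun x hx => (hf x hx).neg) (fun x hx => (hf' x hx).neg)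
  refine fun x hx y hy hxy => neg_lt_neg_iff.mp ?_
  convert h hx hy hxy using 1 <;> simp only [tangentGap, Pi.neg_apply] <;> ring

end TangentGap

theorem deriv_deriv_binEntropy (p : ℝ) : deriv (deriv binEntropy) p = -1 / (p * (1 - p)) :=
  deriv2_binEntropy

theorem hasDerivAt_deriv_binEntropy {p : ℝ} (hp₀ : p ≠ 0) (hp₁ : p ≠ 1) :
    HasDerivAt (deriv binEntropy) (-1 / (p * (1 - p))) p := by
  have hd : DifferentiableAt ℝ (deriv binEntropy) p := by
    rw [funext deriv_binEntropy]
    have : 1 - p ≠ 0 := sub_ne_zero.mpr hp₁.symm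
    fun_prop (disch := assumption)
  exact deriv_deriv_binEntropy p ▸ hd.hasDerivAt

theorem strictConvexOn_deriv_binEntropy : StrictConvexOn ℝ (Ioc 0 2⁻¹) (deriv binEntropy) := by
  refine StrictMonoOn.strictConvexOn_of_deriv (convex_Ioc _ _) (fun p hp => ?_) ?_
  · exact (hasDerivAt_deriv_binEntropy hp.1.ne' (by linarith [hp.2])).continuousAt
      |>.continuousWithinAt
  · rw [interior_Ioc]
    intro x hx y hy hxy
    rw [deriv_deriv_binEntropy, deriv_deriv_binEntropy, neg_div, neg_div, neg_lt_neg_iff]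
    exact one_div_lt_one_div_of_lt (by nlinarith [hx.1, hx.2]) (by nlinarith [hx.1, hy.2])

theorem strictConcaveOn_deriv_binEntropy : StrictConcaveOn ℝ (Ico 2⁻¹ 1) (deriv binEntropy) := by
  refine StrictAntiOn.strictConcaveOn_of_deriv (convex_Ico _ _) (fun p hp => ?_) ?_
  · exact (hasDerivAt_deriv_binEntropy (by linarith [hp.1]) hp.2.ne).continuousAt
      |>.continuousWithinAt
  · rw [interior_Ico]
    intro x hx y hy hxy
    rw [deriv_deriv_binEntropy, deriv_deriv_binEntropy, neg_div, neg_div, neg_lt_neg_iff]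
    exact one_div_lt_one_div_of_lt (by nlinarith [hy.1, hy.2]) (by nlinarith [hx.1, hy.2])

theorem tangentGap_binEntropy {μ ε : ℝ} (hμ : μ ≠ 0) (hμε : μ + ε ≠ 0) (h1μ : 1 - μ ≠ 0)
    (h1με : 1 - μ - ε ≠ 0) :
    tangentGap binEntropy (deriv binEntropy) ε μ =
      (μ + ε) * log (μ / (μ + ε)) + (1 - μ - ε) * log ((1 - μ) / (1 - μ - ε)) := by
  simp only [tangentGap, deriv_binEntropy, binEntropy, log_inv, ← sub_sub]
  rw [log_div hμ hμε, log_div h1μ h1με]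
  ring

theorem stmt_4_general (ε : ℝ) (hε : 0 < ε) :
    StrictMonoOn (fun μ : ℝ => (μ + ε) * Real.log (μ / (μ + ε)) +
        (1 - μ - ε) * Real.log ((1 - μ) / (1 - μ - ε))) (Set.Ioo 0 (1 / 2 - ε)) ∧
    StrictAntiOn (fun μ : ℝ => (μ + ε) * Real.log (μ / (μ + ε)) +
        (1 - μ - ε) * Real.log ((1 - μ) / (1 - μ - ε))) (Set.Ioo (1 / 2) (1 - ε)) := by
  have hf : ∀ x ∈ Ioo (0 : ℝ) 1, HasDerivAt binEntropy (deriv binEntropy x) x :=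
    fun x hx => (differentiableAt_binEntropy hx.1.ne' hx.2.ne).hasDerivAt
  have hf' : ∀ x ∈ Ioo (0 : ℝ) 1, HasDerivAt (deriv binEntropy) (-1 / (x * (1 - x))) x :=
    fun x hx => hasDerivAt_deriv_binEntropy hx.1.ne' hx.2.ne
  have hg : EqOn (tangentGap binEntropy (deriv binEntropy) ε) (fun μ : ℝ => (μ + ε) *
      Real.log (μ / (μ + ε)) + (1 - μ - ε) * Real.log ((1 - μ) / (1 - μ - ε))) (Ioo 0 (1 - ε)) :=
    fun μ ⟨h0, h1⟩ => tangentGap_binEntropy h0.ne' (by linarith) (by linarith) (by linarith)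
  have hleft : Ioo 0 2⁻¹ ⊆ Ioo (0 : ℝ) 1 := Ioo_subset_Ioo_right (by norm_num)
  have hright : Ioo 2⁻¹ 1 ⊆ Ioo (0 : ℝ) 1 := Ioo_subset_Ioo_left (by norm_num)
  rw [one_div]
  constructor
  · exact ((strictConvexOn_deriv_binEntropy.subset Ioo_subset_Ioc_self
      (convex_Ioo _ _)).strictMonoOn_tangentGap hε (fun x hx => hf x (hleft hx))
      (fun x hx => hf' x (hleft hx))).congr (hg.mono (Ioo_subset_Ioo_right (by linarith)))
  · exact ((strictConcaveOn_deriv_binEntropy.subset Ioo_subset_Ico_self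
      (convex_Ioo _ _)).strictAntiOn_tangentGap hε (fun x hx => hf x (hright hx))
      (fun x hx => hf' x (hright hx))).congr (hg.mono (Ioo_subset_Ioo_left (by norm_num)))

theorem stmt_4 (ε : ℝ) (hε : 0 < ε) (hε2 : ε < 1 / 2) :
    StrictMonoOn (fun μ : ℝ => (μ + ε) * Real.log (μ / (μ + ε)) +
        (1 - μ - ε) * Real.log ((1 - μ) / (1 - μ - ε))) (Set.Ioo 0 (1 / 2 - ε)) ∧
    StrictAntiOn (fun μ : ℝ => (μ + ε) * Real.log (μ / (μ + ε)) +
        (1 - μ - ε) * Real.log ((1 - μ) / (1 - μ - ε))) (Set.Ioo (1 / 2) (1 - ε)) :=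
  stmt_4_general ε hε
end

section
/- Let 0 < ε < 1/2. The function μ ↦ g(-ε, μ) is monotonically increasing on (ε, 1/2) and monotonically decreasing on (1/2 + ε, 1). -/
/-!
The derivative of `μ ↦ g(-ε, μ)` is `log b - log a - ε / (μ (1 - μ))` with
`a = (μ - ε)(1 - μ)` and `b = μ(1 - μ + ε)`, so `b - a = ε`: its sign is that of
`μ(1 - μ) - L(a, b)`, where `L` is the logarithmic mean. Since `√(ab) < L(a, b) < (a + b) / 2`,
`a + b = 2μ(1 - μ) - ε(1 - 2μ)` and `ab = (μ(1 - μ))² + εμ(1 - μ)(2μ - 1 - ε)`, the derivative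
is positive for `μ < 1/2` and negative for `μ > 1/2 + ε`.
-/

open Real Set

-- `log ((1 + x) / (1 - x)) = 2 (x + x³/3 + ⋯)` with `x = (b - a) / (a + b)`.
theorem two_mul_sub_div_add_lt_log_sub_log {a b : ℝ} (ha : 0 < a) (hab : a < b) :
    2 * (b - a) / (a + b) < log b - log a := by
  have hb : 0 < b := ha.trans hab
  set x := (b - a) / (a + b) with hx
  have hx0 : 0 < x := div_pos (by linarith) (by linarith)
  have hx1 : x < 1 := (div_lt_one (by linarith)).2 (by linarith)
  have hsum := hasSum_log_sub_log_of_abs_lt_one (abs_lt.2 ⟨by linarith, hx1⟩)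
  have hlog : log (1 + x) - log (1 - x) = log b - log a := by
    rw [← log_div (by linarith) (by linarith), ← log_div hb.ne' ha.ne']
    congr 1
    rw [div_eq_div_iff (by linarith) ha.ne', hx]
    field_simp
    ring
  have htwo : 2 * x + 2 / 3 * x ^ 3 ≤ log (1 + x) - log (1 - x) := by
    have h := sum_le_hasSum (Finset.range 2) (fun k _ => by positivity) hsum
    norm_num [Finset.sum_range_succ] at h
    exact h
  calc 2 * (b - a) / (a + b) = 2 * x := mul_div_assoc _ _ _
    _ < 2 * x + 2 / 3 * x ^ 3 := lt_add_of_pos_right _ (by positivity)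
    _ ≤ log (1 + x) - log (1 - x) := htwo
    _ = log b - log a := hlog

-- `u < sinh u` at `u = log (b / a) / 2`.
theorem log_sub_log_lt_sub_div_sqrt_mul {a b : ℝ} (ha : 0 < a) (hab : a < b) :
    log b - log a < (b - a) / √(a * b) := by
  have hb : 0 < b := ha.trans hab
  have hu : 0 < (log b - log a) / 2 := by linarith [log_lt_log ha hab]
  have hsinh : 2 * sinh ((log b - log a) / 2) = (b - a) / √(a * b) := by
    have hα := sq_sqrt ha.le
    have hβ := sq_sqrt hb.le
    have hα0 : 0 < √a := sqrt_pos.2 ha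
    have hβ0 : 0 < √b := sqrt_pos.2 hb
    rw [sinh_eq, ← neg_div, neg_sub, exp_half, exp_half, exp_sub, exp_sub, exp_log ha, exp_log hb,
      sqrt_div' _ hb.le, sqrt_div' _ ha.le, sqrt_mul ha.le]
    field_simp
    rw [hα, hβ]
  rw [← hsinh]
  linarith [self_lt_sinh_iff.2 hu]

-- The function is `g(-ε, ·)`, i.e. minus the binary relative entropy of `μ - ε` from `μ`.
theorem hasDerivAt_g_neg {ε μ : ℝ} (hε : 0 < ε) (hεμ : ε < μ) (hμ : μ < 1) :
    HasDerivAt (fun μ : ℝ => (μ - ε) * log (μ / (μ - ε)) +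
        (1 - μ + ε) * log ((1 - μ) / (1 - μ + ε)))
      (log (μ * (1 - μ + ε)) - log ((μ - ε) * (1 - μ)) - ε / (μ * (1 - μ))) μ := by
  have hμ0 : μ ≠ 0 := by linarith
  have hμε : μ - ε ≠ 0 := by linarith
  have h1μ : 1 - μ ≠ 0 := by linarith
  have h1με : 1 - μ + ε ≠ 0 := by linarith
  have hA : HasDerivAt (fun μ : ℝ => μ - ε) 1 μ := (hasDerivAt_id μ).sub_const ε
  have hB : HasDerivAt (fun μ : ℝ => 1 - μ + ε) (-1) μ :=
    ((hasDerivAt_id μ).const_sub 1).add_const ε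
  have hC : HasDerivAt (fun μ : ℝ => 1 - μ) (-1) μ := (hasDerivAt_id μ).const_sub 1
  have h := (hA.fun_mul (((hasDerivAt_id' μ).fun_div hA hμε).log (div_ne_zero hμ0 hμε))).fun_add
    (hB.fun_mul ((hC.fun_div hB h1με).log (div_ne_zero h1μ h1με)))
  refine h.congr_deriv ?_
  rw [log_mul hμ0 h1με, log_mul hμε h1μ, log_div hμ0 hμε, log_div h1μ h1με]
  field_simp
  ring

theorem div_lt_log_mul_sub_log_mul {ε μ : ℝ} (hε : 0 < ε) (hεμ : ε < μ) (hμ : μ < 1 / 2) :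
    ε / (μ * (1 - μ)) < log (μ * (1 - μ + ε)) - log ((μ - ε) * (1 - μ)) := by
  have ha : 0 < (μ - ε) * (1 - μ) := mul_pos (by linarith) (by linarith)
  have hq : 0 < μ * (1 - μ) := mul_pos (by linarith) (by linarith)
  have hlog := two_mul_sub_div_add_lt_log_sub_log ha
    (by nlinarith : (μ - ε) * (1 - μ) < μ * (1 - μ + ε))
  have hba : μ * (1 - μ + ε) - (μ - ε) * (1 - μ) = ε := by ring
  have hab : (μ - ε) * (1 - μ) + μ * (1 - μ + ε) = 2 * (μ * (1 - μ)) - ε * (1 - 2 * μ) := by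
    ring
  rw [hba, hab] at hlog
  refine lt_of_le_of_lt ?_ hlog
  rw [div_le_div_iff₀ hq (by linarith)]
  nlinarith [mul_pos (mul_pos hε hε) (by linarith : 0 < 1 - 2 * μ)]

theorem log_mul_sub_log_mul_lt_div {ε μ : ℝ} (hε : 0 < ε) (hμε : 1 / 2 + ε < μ)
    (hμ : μ < 1) :
    log (μ * (1 - μ + ε)) - log ((μ - ε) * (1 - μ)) < ε / (μ * (1 - μ)) := by
  have ha : 0 < (μ - ε) * (1 - μ) := mul_pos (by linarith) (by linarith)
  have hq : 0 < μ * (1 - μ) := mul_pos (by linarith) (by linarith)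
  have hlog := log_sub_log_lt_sub_div_sqrt_mul ha
    (by nlinarith : (μ - ε) * (1 - μ) < μ * (1 - μ + ε))
  have hba : μ * (1 - μ + ε) - (μ - ε) * (1 - μ) = ε := by ring
  have hab : (μ - ε) * (1 - μ) * (μ * (1 - μ + ε)) =
      (μ * (1 - μ)) ^ 2 + ε * (μ * (1 - μ)) * (2 * μ - 1 - ε) := by ring
  rw [hba, hab] at hlog
  refine hlog.trans (div_lt_div_of_pos_left hε hq ?_)
  rw [lt_sqrt hq.le]
  nlinarith [mul_pos (mul_pos hε hq) (by linarith : 0 < 2 * μ - 1 - ε)]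

theorem strictMonoOn_Ioo_of_hasDerivAt_pos {f f' : ℝ → ℝ} {a b : ℝ}
    (hf : ∀ x ∈ Ioo a b, HasDerivAt f (f' x) x) (hf' : ∀ x ∈ Ioo a b, 0 < f' x) :
    StrictMonoOn f (Ioo a b) :=
  strictMonoOn_of_hasDerivWithinAt_pos (convex_Ioo a b)
    (fun x hx => (hf x hx).continuousAt.continuousWithinAt)
    (fun x hx => (hf x (interior_subset hx)).hasDerivWithinAt)
    fun x hx => hf' x (interior_subset hx)

theorem strictAntiOn_Ioo_of_hasDerivAt_neg {f f' : ℝ → ℝ} {a b : ℝ}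
    (hf : ∀ x ∈ Ioo a b, HasDerivAt f (f' x) x) (hf' : ∀ x ∈ Ioo a b, f' x < 0) :
    StrictAntiOn f (Ioo a b) :=
  strictAntiOn_of_hasDerivWithinAt_neg (convex_Ioo a b)
    (fun x hx => (hf x hx).continuousAt.continuousWithinAt)
    (fun x hx => (hf x (interior_subset hx)).hasDerivWithinAt)
    fun x hx => hf' x (interior_subset hx)

theorem stmt_5_general (ε : ℝ) (hε : 0 < ε) :
    StrictMonoOn (fun μ : ℝ => (μ - ε) * Real.log (μ / (μ - ε)) +
        (1 - μ + ε) * Real.log ((1 - μ) / (1 - μ + ε))) (Set.Ioo ε (1 / 2)) ∧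
    StrictAntiOn (fun μ : ℝ => (μ - ε) * Real.log (μ / (μ - ε)) +
        (1 - μ + ε) * Real.log ((1 - μ) / (1 - μ + ε))) (Set.Ioo (1 / 2 + ε) 1) := by
  have hderiv (μ : ℝ) (hεμ : ε < μ) (hμ : μ < 1) := hasDerivAt_g_neg hε hεμ hμ
  refine ⟨strictMonoOn_Ioo_of_hasDerivAt_pos (fun μ hμ => hderiv μ hμ.1 (by linarith [hμ.2]))
      fun μ hμ => ?_, strictAntiOn_Ioo_of_hasDerivAt_neg
      (fun μ hμ => hderiv μ (by linarith [hμ.1]) hμ.2) fun μ hμ => ?_⟩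
  · linarith [div_lt_log_mul_sub_log_mul hε hμ.1 hμ.2]
  · linarith [log_mul_sub_log_mul_lt_div hε hμ.1 hμ.2]

theorem stmt_5 (ε : ℝ) (hε : 0 < ε) (hε2 : ε < 1 / 2) :
    StrictMonoOn (fun μ : ℝ => (μ - ε) * Real.log (μ / (μ - ε)) +
        (1 - μ + ε) * Real.log ((1 - μ) / (1 - μ + ε))) (Set.Ioo ε (1 / 2)) ∧
    StrictAntiOn (fun μ : ℝ => (μ - ε) * Real.log (μ / (μ - ε)) +
        (1 - μ + ε) * Real.log ((1 - μ) / (1 - μ + ε))) (Set.Ioo (1 / 2 + ε) 1) :=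
  stmt_5_general ε hε
end

section
/- For 0 < ε < min(μ, 1 - μ), the derivative with respect to ε of the difference g(ε, μ) - g(-ε, μ) equals ln(1 + ε²(1 - 2μ)/((μ² - ε²)(1 - μ)²)). -/
/-!
Each of the four terms of `g(ε, μ) - g(-ε, μ)` has the shape `(a ± e) · log (a / (a ± e))`,
whose derivative is `±(log (a / (a ± e)) - 1)`. The constants `∓1` cancel, and the four
logarithms combine into the logarithm of
`μ² / (μ² - ε²) · ((1 - μ)² - ε²) / (1 - μ)² = 1 + ε² (1 - 2μ) / ((μ² - ε²)(1 - μ)²)`.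
-/

open Real

lemma hasDerivAt_add_mul_log_div_add {a b : ℝ} (ha : 0 < a) (hab : 0 < a + b) :
    HasDerivAt (fun e : ℝ => (a + e) * log (a / (a + e))) (log (a / (a + b)) - 1) b := by
  have h_lin : HasDerivAt (fun e : ℝ => a + e) 1 b := (hasDerivAt_id b).const_add a
  have h_log : HasDerivAt (fun e : ℝ => log (a / (a + e))) (-(a + b)⁻¹) b := by
    refine ((hasDerivAt_const b a).fun_div h_lin hab.ne').log (by positivity) |>.congr_deriv ?_
    field_simp
    ring
  refine (h_lin.fun_mul h_log).congr_deriv ?_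
  rw [mul_neg, mul_inv_cancel₀ hab.ne']
  ring

lemma hasDerivAt_sub_mul_log_div_sub {a b : ℝ} (ha : 0 < a) (hab : 0 < a - b) :
    HasDerivAt (fun e : ℝ => (a - e) * log (a / (a - e))) (1 - log (a / (a - b))) b := by
  have h := (hasDerivAt_add_mul_log_div_add ha (b := -b) (by linarith)).comp b (hasDerivAt_neg b)
  simp only [← sub_eq_add_neg] at h
  exact h.congr_deriv (by ring)

lemma log_one_add_sq_mul_div_eq {ε μ : ℝ} (hε : 0 < ε) (hμε : ε < μ) (hμε' : ε < 1 - μ) :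
    log (1 + ε ^ 2 * (1 - 2 * μ) / ((μ ^ 2 - ε ^ 2) * (1 - μ) ^ 2))
      = log (μ / (μ + ε)) + log (μ / (μ - ε))
        - log ((1 - μ) / (1 - μ - ε)) - log ((1 - μ) / (1 - μ + ε)) := by
  have hμ : 0 < μ := hε.trans hμε
  have hμ' : 0 < 1 - μ := hε.trans hμε'
  have h₁ : 0 < μ - ε := by linarith
  have h₂ : 0 < 1 - μ - ε := by linarith
  have h_arg : 1 + ε ^ 2 * (1 - 2 * μ) / ((μ ^ 2 - ε ^ 2) * (1 - μ) ^ 2)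
      = μ / (μ + ε) * (μ / (μ - ε)) / ((1 - μ) / (1 - μ - ε)) / ((1 - μ) / (1 - μ + ε)) := by
    have : μ ^ 2 - ε ^ 2 ≠ 0 := by nlinarith
    field_simp
    ring
  rw [h_arg, log_div (by positivity) (by positivity), log_div (by positivity) (by positivity),
    log_mul (by positivity) (by positivity)]

theorem stmt_6 (ε μ : ℝ) (hε : 0 < ε) (hεμ : ε < min μ (1 - μ)) :
    deriv (fun e : ℝ =>
        ((μ + e) * Real.log (μ / (μ + e)) + (1 - μ - e) * Real.log ((1 - μ) / (1 - μ - e)))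
          - ((μ - e) * Real.log (μ / (μ - e)) + (1 - μ + e) * Real.log ((1 - μ) / (1 - μ + e)))) ε
      = Real.log (1 + ε ^ 2 * (1 - 2 * μ) / ((μ ^ 2 - ε ^ 2) * (1 - μ) ^ 2)) := by
  obtain ⟨hμε, hμε'⟩ := lt_min_iff.mp hεμ
  have hμ : 0 < μ := hε.trans hμε
  have hμ' : 0 < 1 - μ := hε.trans hμε'
  have h_deriv :=
    ((hasDerivAt_add_mul_log_div_add hμ (b := ε) (by linarith)).add
      (hasDerivAt_sub_mul_log_div_sub hμ' (b := ε) (by linarith))).sub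
    ((hasDerivAt_sub_mul_log_div_sub hμ (b := ε) (by linarith)).add
      (hasDerivAt_add_mul_log_div_add hμ' (b := ε) (by linarith)))
  refine h_deriv.deriv.trans ?_
  rw [log_one_add_sq_mul_div_eq hε hμε hμε']
  ring
end

section
/- Let 0 < ε < 1. The function μ ↦ g(εμ, μ) is monotonically decreasing on (0, 1/(1+ε)). -/
/-!
Writing `c = 1 + ε` and `t = 1 - cμ`, one has `c(1 - μ) = t + ε`, and the function equals
`t · log (1 + ε / t) - log c`. Now `t · log (1 + ε / t) / ε` is the slope of the secant of `log`
between `1` and `1 + ε / t`; by strict concavity of `log` it increases as `1 + ε / t` decreases,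
i.e. as `t` increases, i.e. as `μ` decreases.
-/

open Real Set

theorem strictMonoOn_mul_log_one_add_div {ε : ℝ} (hε : 0 < ε) :
    StrictMonoOn (fun t : ℝ => t * log (1 + ε / t)) (Ioi 0) := by
  intro s (hs : 0 < s) t (ht : 0 < t) hst
  have hslope := strictConcaveOn_log_Ioi.secant_strict_mono (a := 1) (mem_Ioi.2 one_pos)
    (mem_Ioi.2 (by positivity : (0 : ℝ) < 1 + ε / t))
    (mem_Ioi.2 (by positivity : (0 : ℝ) < 1 + ε / s))
    (by simp [hε.ne', ht.ne']) (by simp [hε.ne', hs.ne']) (by gcongr)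
  simp only [log_one, sub_zero, add_sub_cancel_left, div_div_eq_mul_div] at hslope
  simpa [mul_comm, div_lt_div_iff_of_pos_right hε] using hslope

theorem mul_log_div_add_mul_log_div_eq {ε μ : ℝ} (hc : 0 < 1 + ε) (hμ : μ ≠ 1)
    (ht : 0 < 1 - (1 + ε) * μ) :
    (μ + ε * μ) * log (μ / (μ + ε * μ)) + (1 - μ - ε * μ) * log ((1 - μ) / (1 - μ - ε * μ)) =
      (1 - (1 + ε) * μ) * log (1 + ε / (1 - (1 + ε) * μ)) - log (1 + ε) := by
  set t := 1 - (1 + ε) * μ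
  have hratio : 1 + ε / t = (1 + ε) * ((1 - μ) / t) := by
    field_simp
    ring
  have hfirst : (μ + ε * μ) * log (μ / (μ + ε * μ)) = -((1 + ε) * μ * log (1 + ε)) := by
    rcases eq_or_ne μ 0 with rfl | hμ0
    · simp
    rw [show μ / (μ + ε * μ) = (1 + ε)⁻¹ by field_simp, log_inv]
    ring
  rw [hfirst, show 1 - μ - ε * μ = t by ring, hratio,
    log_mul hc.ne' (div_ne_zero (sub_ne_zero.2 hμ.symm) ht.ne')]
  ring

theorem stmt_10_general (ε : ℝ) (hε : 0 < ε) :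
    StrictAntiOn (fun μ : ℝ =>
        (μ + ε * μ) * Real.log (μ / (μ + ε * μ)) +
        (1 - μ - ε * μ) * Real.log ((1 - μ) / (1 - μ - ε * μ)))
      (Set.Ioo 0 (1 / (1 + ε))) := by
  have hc : 0 < 1 + ε := by linarith
  have ht : ∀ μ ∈ Ioo 0 (1 / (1 + ε)), 0 < 1 - (1 + ε) * μ := fun μ hμ => by
    linarith [(lt_div_iff₀' hc).1 hμ.2]
  have hμ1 : ∀ μ ∈ Ioo 0 (1 / (1 + ε)), μ ≠ 1 := by
    rintro μ hμ rfl
    linarith [ht 1 hμ]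
  intro x hx y hy hxy
  simp only
  rw [mul_log_div_add_mul_log_div_eq hc (hμ1 x hx) (ht x hx),
    mul_log_div_add_mul_log_div_eq hc (hμ1 y hy) (ht y hy)]
  have hty : 1 - (1 + ε) * y < 1 - (1 + ε) * x := by linarith [mul_lt_mul_of_pos_left hxy hc]
  linarith [strictMonoOn_mul_log_one_add_div hε (ht y hy) (ht x hx) hty]

theorem stmt_10 (ε : ℝ) (hε : 0 < ε) (hε1 : ε < 1) :
    StrictAntiOn (fun μ : ℝ =>
        (μ + ε * μ) * Real.log (μ / (μ + ε * μ)) +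
        (1 - μ - ε * μ) * Real.log ((1 - μ) / (1 - μ - ε * μ)))
      (Set.Ioo 0 (1 / (1 + ε))) :=
  stmt_10_general ε hε
end

section
/- Let 0 < ε < 1. The function μ ↦ g(-εμ, μ) is monotonically decreasing on (0, 1). -/
/-!
`g(-εμ, μ)` is `-D(cμ ‖ μ)`, minus the relative entropy of two Bernoulli laws, with `c = 1 - ε`.
In closed form `D(cμ ‖ μ) = cμ log c + (1 - cμ) log t` with `t = (1 - cμ) / (1 - μ)`, and its
derivative in `μ` is `t - c - c log (t / c)`; since `t > 1 > c`, this is positive by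
`log y < y - 1` for `y ≠ 1`.
-/

open Real Set

noncomputable def binaryKL (p q : ℝ) : ℝ :=
  p * log (p / q) + (1 - p) * log ((1 - p) / (1 - q))

lemma mul_log_div_lt_sub {c t : ℝ} (hc : 0 < c) (ht : 0 < t) (hne : t ≠ c) :
    c * log (t / c) < t - c := by
  have h := log_lt_sub_one_of_pos (div_pos ht hc) (by rwa [ne_eq, div_eq_one_iff_eq hc.ne'])
  calc c * log (t / c) < c * (t / c - 1) := mul_lt_mul_of_pos_left h hc
    _ = t - c := by field_simp

section

variable {c : ℝ}

lemma binaryKL_mul_self_eq {μ : ℝ} (hμ : 0 < μ) (hμ1 : μ < 1) (hcμ : c * μ < 1) :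
    binaryKL (c * μ) μ = c * μ * log c + (1 - c * μ) * (log (1 - c * μ) - log (1 - μ)) := by
  rw [binaryKL, mul_div_cancel_right₀ c hμ.ne', log_div (by linarith) (by linarith)]

lemma hasDerivAt_binaryKL_mul_self {x : ℝ} (hx : x < 1) (hcx : c * x < 1) :
    HasDerivAt (fun μ => c * μ * log c + (1 - c * μ) * (log (1 - c * μ) - log (1 - μ)))
      (c * log c - c * (log (1 - c * x) - log (1 - x)) +
        (1 - c * x) * (1 / (1 - x) - c / (1 - c * x))) x := by
  have h1 : HasDerivAt (fun μ => 1 - μ) (-1) x := by simpa using (hasDerivAt_id x).const_sub 1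
  have hc : HasDerivAt (fun μ => 1 - c * μ) (-c) x := by
    simpa using ((hasDerivAt_id x).const_mul c).const_sub 1
  refine ((((hasDerivAt_id x).const_mul c).mul_const (log c)).add
    (hc.mul ((hc.log (by linarith)).sub (h1.log (by linarith))))).congr_deriv ?_
  simp only [Pi.sub_apply]
  ring

lemma binaryKL_mul_self_deriv_pos (hc : 0 < c) (hc1 : c < 1) {x : ℝ} (hx : x ∈ Ioo 0 1) :
    0 < c * log c - c * (log (1 - c * x) - log (1 - x)) +
      (1 - c * x) * (1 / (1 - x) - c / (1 - c * x)) := by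
  obtain ⟨hx0, hx1⟩ := hx
  have hcx : c * x < x := mul_lt_of_lt_one_left hx0 hc1
  have h1cx : 0 < 1 - c * x := by linarith
  set t := (1 - c * x) / (1 - x) with ht
  have ht1 : 1 < t := by rw [ht, one_lt_div (by linarith)]; linarith
  have hlog : log (t / c) = log (1 - c * x) - log (1 - x) - log c := by
    rw [log_div (by positivity) hc.ne', log_div (by linarith) (by linarith)]
  have hrat : (1 - c * x) * (1 / (1 - x) - c / (1 - c * x)) = t - c := by
    rw [ht]; field_simp
  have hgap := mul_log_div_lt_sub hc (by linarith) (by linarith : t ≠ c)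
  rw [hlog] at hgap
  linarith

theorem strictMonoOn_binaryKL_mul_self (hc : 0 < c) (hc1 : c < 1) :
    StrictMonoOn (fun μ => binaryKL (c * μ) μ) (Ioo 0 1) := by
  have hcx : ∀ x ∈ Ioo (0 : ℝ) 1, c * x < 1 := fun x hx =>
    (mul_lt_of_lt_one_left hx.1 hc1).trans hx.2
  have hderiv := fun x (hx : x ∈ Ioo (0 : ℝ) 1) => hasDerivAt_binaryKL_mul_self hx.2 (hcx x hx)
  refine StrictMonoOn.congr ?_ fun x hx => (binaryKL_mul_self_eq hx.1 hx.2 (hcx x hx)).symm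
  refine strictMonoOn_of_hasDerivWithinAt_pos (convex_Ioo 0 1)
    (fun x hx => (hderiv x hx).continuousAt.continuousWithinAt) (fun x hx => ?_)
    (fun x hx => binaryKL_mul_self_deriv_pos hc hc1 (by rwa [interior_Ioo] at hx))
  rw [interior_Ioo] at hx ⊢
  exact (hderiv x hx).hasDerivWithinAt

end

theorem stmt_11 (ε : ℝ) (hε : 0 < ε) (hε1 : ε < 1) :
    StrictAntiOn (fun μ : ℝ =>
        (μ - ε * μ) * Real.log (μ / (μ - ε * μ)) +
        (1 - μ + ε * μ) * Real.log ((1 - μ) / (1 - μ + ε * μ)))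
      (Set.Ioo 0 1) := by
  have h := (strictMonoOn_binaryKL_mul_self (c := 1 - ε) (by linarith) (by linarith)).neg
  convert h using 2 with μ
  simp only [binaryKL]
  rw [← inv_div μ, ← inv_div (1 - μ), log_inv, log_inv]
  ring_nf
end

section
/- Suppose 0 < ε_r < 1 and 0 < ε_a/ε_r + ε_a ≤ 1/2. Let X₁, ..., Xₙ be i.i.d. [0,1]-valued random variables with mean μ satisfying 0 < μ ≤ ε_a/ε_r, and let μ̂ be their sample mean. Then Pr{μ̂ ≤ μ - ε_a} ≤ exp(n·g(-ε_a, ε_a/ε_r)), where g(δ, ν) = (ν+δ)·ln(ν/(ν+δ)) + (1-ν-δ)·ln((1-ν)/(1-ν-δ)). -/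
/-!
Chernoff's bound at the tilt `r = exp t` that is optimal for a Bernoulli variable of mean
`ν = ε_a / ε_r`, combined with the convexity bound `E[exp (t X)] ≤ 1 - μ + μ exp t` for
`[0, 1]`-valued `X`, gives the bound `exp (n φ(μ))` with
`φ(μ) = -log r * (μ - ε_a) + log (1 - μ + μ r)`. As `log` is concave and `ν ≤ 1/2`, the function
`φ` is nondecreasing up to `ν`, and `φ(ν) = g(-ε_a, ν)`.
-/

open MeasureTheory ProbabilityTheory Real

lemma two_mul_le_log_sub_log {y : ℝ} (h0 : 0 ≤ y) (h1 : y < 1) :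
    2 * y ≤ log (1 + y) - log (1 - y) := by
  have hsum := hasSum_log_sub_log_of_abs_lt_one (abs_lt.2 ⟨by linarith, h1⟩)
  simpa using le_hasSum hsum 0 fun k _ => by positivity

lemma two_mul_one_sub_div_one_add_le_neg_log {r : ℝ} (h0 : 0 < r) (h1 : r ≤ 1) :
    2 * (1 - r) / (1 + r) ≤ -log r := by
  have hy1 : (1 - r) / (1 + r) < 1 := (div_lt_one (by linarith)).2 (by linarith)
  have hlog : log (1 + (1 - r) / (1 + r)) - log (1 - (1 - r) / (1 + r)) = -log r := by
    rw [← log_div (by positivity) (by linarith), ← log_inv]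
    congr 1
    field_simp [h0.ne']
    ring
  simpa only [hlog, mul_div_assoc] using
    two_mul_le_log_sub_log (div_nonneg (by linarith) (by linarith)) hy1

lemma exp_mul_le_one_sub_add_mul_exp {x : ℝ} (t : ℝ) (hx : x ∈ Set.Icc (0 : ℝ) 1) :
    exp (t * x) ≤ 1 - x + x * exp t := by
  have := convexOn_exp.2 (Set.mem_univ 0) (Set.mem_univ t) (sub_nonneg.2 hx.2) hx.1 (by ring)
  simpa [mul_comm] using this

lemma neg_log_mul_add_log_le {r μ ν : ℝ} (hr0 : 0 < r) (hr1 : r ≤ 1) (hμν : μ ≤ ν)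
    (hν : ν ≤ 1 / 2) :
    -log r * μ + log (1 - μ + μ * r) ≤ -log r * ν + log (1 - ν + ν * r) := by
  have hAν : 0 < 1 - ν + ν * r := by nlinarith
  have hAμ : 0 < 1 - μ + μ * r := by nlinarith
  have hslope : (1 - r) / (1 - ν + ν * r) ≤ -log r := calc
    _ ≤ 2 * (1 - r) / (1 + r) := by
      rw [div_le_div_iff₀ hAν (by linarith)]
      nlinarith [mul_nonneg (mul_nonneg (sub_nonneg.2 hr1) (sub_nonneg.2 hr1))
        (by linarith : (0 : ℝ) ≤ 1 - 2 * ν)]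
    _ ≤ -log r := two_mul_one_sub_div_one_add_le_neg_log hr0 hr1
  -- `log` lies below its tangent at `1 - ν + ν * r`
  have htangent : log (1 - μ + μ * r) - log (1 - ν + ν * r)
      ≤ (ν - μ) * ((1 - r) / (1 - ν + ν * r)) := by
    rw [← log_div hAμ.ne' hAν.ne']
    refine (log_le_sub_one_of_pos (div_pos hAμ hAν)).trans_eq ?_
    rw [div_sub_one hAν.ne', mul_div_assoc']
    ring
  nlinarith [mul_le_mul_of_nonneg_left hslope (sub_nonneg.2 hμν)]

lemma neg_log_mul_add_log_eq {δ ν r : ℝ} (hν0 : 0 < ν) (hν1 : ν < 1) (hδ0 : 0 < ν + δ)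
    (hδ1 : 0 < 1 - ν - δ) (hr : r = (ν + δ) * (1 - ν) / (ν * (1 - ν - δ))) :
    -log r * (ν + δ) + log (1 - ν + ν * r)
      = (ν + δ) * log (ν / (ν + δ)) + (1 - ν - δ) * log ((1 - ν) / (1 - ν - δ)) := by
  have hA : 1 - ν + ν * r = (1 - ν) / (1 - ν - δ) := by
    rw [hr]
    field_simp
    ring
  have hb : 0 < 1 - ν := by linarith
  rw [hA, hr, log_div (by positivity) (by positivity), log_mul hδ0.ne' hb.ne',
    log_mul hν0.ne' hδ1.ne', log_div hν0.ne' hδ0.ne', log_div hb.ne' hδ1.ne']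
  ring

section

variable {Ω : Type*} [MeasurableSpace Ω] {P : Measure Ω}

lemma mgf_le_one_sub_add_mul_exp [IsProbabilityMeasure P] {X : Ω → ℝ} (hX : AEMeasurable X P)
    (hb : ∀ᵐ ω ∂P, X ω ∈ Set.Icc 0 1) (t : ℝ) :
    mgf X P t ≤ 1 - P[X] + P[X] * exp t := by
  have hXint : Integrable X P := .of_mem_Icc 0 1 hX hb
  have hint : Integrable (fun ω => 1 - X ω) P := (integrable_const 1).sub hXint
  calc mgf X P t = ∫ ω, exp (t * X ω) ∂P := rfl
    _ ≤ ∫ ω, (1 - X ω + X ω * exp t) ∂P :=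
      integral_mono_ae (integrable_exp_mul_of_mem_Icc hX hb)
        (hint.add (hXint.mul_const _))
        (hb.mono fun ω hω => exp_mul_le_one_sub_add_mul_exp t hω)
    _ = 1 - P[X] + P[X] * exp t := by
      rw [integral_add hint (hXint.mul_const _),
        integral_sub (integrable_const 1) hXint, integral_mul_const]
      simp

lemma measureReal_sum_le_le_exp_mul_pow {ι : Type*} [Fintype ι] {X : ι → Ω → ℝ}
    (hindep : iIndepFun X P) (hmeas : ∀ i, Measurable (X i))
    (hb : ∀ i, ∀ᵐ ω ∂P, X i ω ∈ Set.Icc 0 1) {μ : ℝ} (hmean : ∀ i, P[X i] = μ) (c : ℝ)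
    {t : ℝ} (ht : t ≤ 0) :
    P.real {ω | ∑ i, X i ω ≤ c} ≤ exp (-t * c) * (1 - μ + μ * exp t) ^ Fintype.card ι := by
  have := hindep.isProbabilityMeasure
  have hint := hindep.integrable_exp_mul_sum hmeas (s := Finset.univ) (t := t)
    fun i _ => integrable_exp_mul_of_mem_Icc (hmeas i).aemeasurable (hb i)
  calc P.real {ω | ∑ i, X i ω ≤ c} = P.real {ω | (∑ i, X i) ω ≤ c} := by simp
    _ ≤ exp (-t * c) * mgf (∑ i, X i) P t := measure_le_le_exp_mul_mgf c ht hint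
    _ = exp (-t * c) * ∏ i, mgf (X i) P t := by rw [hindep.mgf_sum hmeas]
    _ ≤ exp (-t * c) * ∏ _i : ι, (1 - μ + μ * exp t) := by
      gcongr with i
      · exact fun i _ => mgf_nonneg
      · exact hmean i ▸ mgf_le_one_sub_add_mul_exp (hmeas i).aemeasurable (hb i) t
    _ = exp (-t * c) * (1 - μ + μ * exp t) ^ Fintype.card ι := by
      rw [Finset.prod_const, Finset.card_univ]

end

theorem stmt_16_general (εa εr : ℝ) (hεa : 0 < εa) (hεr : 0 < εr) (hεr1 : εr < 1)
    (hc : εa / εr + εa ≤ 1 / 2)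
    {Ω : Type*} [MeasurableSpace Ω] (P : Measure Ω) [IsProbabilityMeasure P]
    (n : ℕ) (hn : 0 < n) (X : Fin n → Ω → ℝ)
    (hmeas : ∀ i, Measurable (X i))
    (hindep : iIndepFun X P)
    (hbound : ∀ i ω, X i ω ∈ Set.Icc (0 : ℝ) 1)
    (μ : ℝ) (hμ2 : μ ≤ εa / εr) (hmean : ∀ i, ∫ ω, X i ω ∂P = μ) :
    P {ω | (∑ i, X i ω) / n ≤ μ - εa}
      ≤ ENNReal.ofReal (Real.exp (n *
          ((εa / εr + -εa) * Real.log ((εa / εr) / (εa / εr + -εa)) +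
           (1 - εa / εr - -εa) * Real.log ((1 - εa / εr) / (1 - εa / εr - -εa))))) := by
  set ν := εa / εr
  have hν : εa < ν := (lt_div_iff₀ hεr).2 (by nlinarith)
  set r := (ν + -εa) * (1 - ν) / (ν * (1 - ν - -εa)) with hr
  have hr0 : 0 < r :=
    div_pos (mul_pos (by linarith) (by linarith)) (mul_pos (by linarith) (by linarith))
  have hr1 : r ≤ 1 :=
    (div_le_one (mul_pos (by linarith) (by linarith))).2 (by nlinarith)
  have hevent : {ω | (∑ i, X i ω) / n ≤ μ - εa} = {ω | ∑ i, X i ω ≤ n * (μ - εa)} := by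
    ext ω
    rw [Set.mem_ofPred_eq, Set.mem_ofPred_eq, div_le_iff₀ (by positivity), mul_comm]
  rw [hevent, ← ofReal_measureReal]
  gcongr
  calc P.real {ω | ∑ i, X i ω ≤ n * (μ - εa)}
      ≤ exp (-log r * (n * (μ - εa))) * (1 - μ + μ * exp (log r)) ^ n := by
        simpa using measureReal_sum_le_le_exp_mul_pow hindep hmeas
          (fun i => ae_of_all _ (hbound i)) hmean _ (log_nonpos hr0.le hr1)
    _ = exp (n * (-log r * (μ + -εa) + log (1 - μ + μ * r))) := by
        have hA : 0 < 1 - μ + μ * r := by nlinarith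
        rw [exp_log hr0, ← exp_log (pow_pos hA n), ← exp_add, log_pow]
        ring_nf
    _ ≤ exp (n * (-log r * (ν + -εa) + log (1 - ν + ν * r))) := by
        gcongr exp (_ * ?_)
        linarith [neg_log_mul_add_log_le hr0 hr1 hμ2 (by linarith)]
    _ = _ := by
        rw [neg_log_mul_add_log_eq (by linarith) (by linarith) (by linarith) (by linarith) hr]

theorem stmt_16 (εa εr : ℝ) (hεa : 0 < εa) (hεa1 : εa < 1) (hεr : 0 < εr) (hεr1 : εr < 1)
    (hc : εa / εr + εa ≤ 1 / 2)
    {Ω : Type*} [MeasurableSpace Ω] (P : Measure Ω) [IsProbabilityMeasure P]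
    (n : ℕ) (hn : 0 < n) (X : Fin n → Ω → ℝ)
    (hmeas : ∀ i, Measurable (X i))
    (hindep : iIndepFun X P)
    (hident : ∀ i j, IdentDistrib (X i) (X j) P P)
    (hbound : ∀ i ω, X i ω ∈ Set.Icc (0 : ℝ) 1)
    (μ : ℝ) (hμ : 0 < μ) (hμ2 : μ ≤ εa / εr) (hmean : ∀ i, ∫ ω, X i ω ∂P = μ) :
    P {ω | (∑ i, X i ω) / n ≤ μ - εa}
      ≤ ENNReal.ofReal (Real.exp (n *
          ((εa / εr + -εa) * Real.log ((εa / εr) / (εa / εr + -εa)) +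
           (1 - εa / εr - -εa) * Real.log ((1 - εa / εr) / (1 - εa / εr - -εa))))) :=
  stmt_16_general εa εr hεa hεr hεr1 hc P n hn X hmeas hindep hbound μ hμ2 hmean
end

section
/- Let ε_a, ε_r ∈ (0,1) with ε_a/ε_r + ε_a ≤ 1/2, and δ ∈ (0,1). Let X₁, ..., Xₙ be i.i.d. random variables with 0 ≤ Xᵢ ≤ 1 and E[Xᵢ] = μ ∈ (0,1), and set μ̂ = (∑ᵢ Xᵢ)/n. If n > ε_r·ln(2/δ) / [(ε_a + ε_a·ε_r)·ln(1 + ε_r) + (ε_r - ε_a - ε_a·ε_r)·ln(1 - ε_a·ε_r/(ε_r - ε_a))], then Pr{ |μ̂ - μ| < ε_a or |(μ̂ - μ)/μ| < ε_r } > 1 - δ. -/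
/-!
Put `p = εa / εr`, the mean at which the absolute and the relative tolerance coincide, and let
`K = KL((1 + εr) p ‖ p)` be a Bernoulli Kullback–Leibler divergence; the sample-size condition
says exactly `n K > log (2 / δ)`. On the failure event the sample mean misses `μ` by at least
`t = εr max p μ`, and the Chernoff–Hoeffding bound controls each tail by `exp (-n KL(μ ± t ‖ μ))`.
Three monotonicity facts — `m ↦ KL(m + a ‖ m)` decreases below `1/2`, `z ↦ KL(r z ‖ z)`
increases, and `KL(p + x ‖ p) ≤ KL(p - x ‖ p)` for `p ≤ 1/2` — show that both divergences are
at least `K`, so the failure probability is below `2 exp (-n K) < δ`.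
-/

open Real Set MeasureTheory ProbabilityTheory Filter Topology

lemma log_le_sub_inv_div_two {x : ℝ} (hx : 1 ≤ x) : log x ≤ (x - x⁻¹) / 2 := by
  rw [← sinh_log (by linarith)]
  exact self_le_sinh_iff.2 (log_nonneg hx)

lemma log_add_log_le_sub_inv {u v : ℝ} (hv : 1 ≤ v) (hvu : v ≤ u) :
    log u + log v ≤ u - v⁻¹ := by
  have hu := log_le_sub_inv_div_two (hv.trans hvu)
  have hv' := log_le_sub_inv_div_two hv
  have : v⁻¹ - u⁻¹ ≤ u - v := by
    have huv : 1 ≤ v * u := one_le_mul_of_one_le_of_one_le hv (hv.trans hvu)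
    rw [inv_sub_inv (by linarith) (by linarith), div_le_iff₀ (by linarith)]
    nlinarith [mul_le_mul_of_nonneg_left huv (sub_nonneg.2 hvu)]
  linarith

/-- `KL(Bernoulli a ‖ Bernoulli p)`. Since `log 0 = 0`, the formula is also right at `a ∈ {0, 1}`,
e.g. `bernoulliKL 1 p = -log p`. -/
noncomputable def bernoulliKL (a p : ℝ) : ℝ :=
  a * log a - a * log p + (1 - a) * log (1 - a) - (1 - a) * log (1 - p)

lemma bernoulliKL_one_sub_one_sub (a p : ℝ) : bernoulliKL (1 - a) (1 - p) = bernoulliKL a p := by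
  simp only [bernoulliKL, sub_sub_cancel]
  ring

lemma bernoulliKL_eq_of_mem_Ioo {a p : ℝ} (ha : a ∈ Ioo 0 1) (hp : p ∈ Ioo 0 1) :
    bernoulliKL a p = a * log (a / p) + (1 - a) * log ((1 - a) / (1 - p)) := by
  obtain ⟨ha0, ha1⟩ := ha
  obtain ⟨hp0, hp1⟩ := hp
  rw [bernoulliKL, log_div ha0.ne' hp0.ne', log_div (by linarith) (by linarith)]
  ring

lemma bernoulliKL_pos {a p : ℝ} (ha : a ∈ Ioo 0 1) (hp : p ∈ Ioo 0 1) (hap : a ≠ p) :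
    0 < bernoulliKL a p := by
  obtain ⟨ha0, ha1⟩ := ha
  obtain ⟨hp0, hp1⟩ := hp
  have h₁ : a * log (p / a) < p - a := by
    have := log_lt_sub_one_of_pos (div_pos hp0 ha0)
      (by rwa [ne_eq, div_eq_one_iff_eq ha0.ne', eq_comm])
    calc a * log (p / a) < a * (p / a - 1) := by gcongr
      _ = p - a := by field_simp
  have h₂ : (1 - a) * log ((1 - p) / (1 - a)) ≤ a - p := by
    have := log_le_sub_one_of_pos (x := (1 - p) / (1 - a)) (by apply div_pos <;> linarith)
    calc (1 - a) * log ((1 - p) / (1 - a)) ≤ (1 - a) * ((1 - p) / (1 - a) - 1) := by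
          gcongr
      _ = a - p := by field_simp; ring
  have : bernoulliKL a p = -(a * log (p / a) + (1 - a) * log ((1 - p) / (1 - a))) := by
    rw [bernoulliKL, log_div hp0.ne' ha0.ne', log_div (by linarith) (by linarith)]
    ring
  linarith

theorem HasDerivAt.bernoulliKL {f g : ℝ → ℝ} {f' g' x : ℝ} (hf : HasDerivAt f f' x)
    (hg : HasDerivAt g g' x) (hfx : f x ∈ Ioo 0 1) (hgx : g x ∈ Ioo 0 1) :
    HasDerivAt (fun y => bernoulliKL (f y) (g y))
      (f' * (Real.log (f x / g x) - Real.log ((1 - f x) / (1 - g x)))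
        + g' * ((1 - f x) / (1 - g x) - f x / g x)) x := by
  obtain ⟨hf0, hf1⟩ := hfx
  obtain ⟨hg0, hg1⟩ := hgx
  have hf₁ : HasDerivAt (fun y => 1 - f y) (-f') x := by simpa using hf.const_sub 1
  have hg₁ : HasDerivAt (fun y => 1 - g y) (-g') x := by simpa using hg.const_sub 1
  have := (((hf.mul (hf.log hf0.ne')).sub (hf.mul (hg.log hg0.ne'))).add
    (hf₁.mul (hf₁.log (by linarith)))).sub (hf₁.mul (hg₁.log (by linarith)))
  refine HasDerivAt.congr_deriv (f := fun y => _root_.bernoulliKL (f y) (g y)) this ?_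
  rw [log_div hf0.ne' hg0.ne', log_div (by linarith) (by linarith)]
  field_simp
  ring

theorem ContinuousOn.bernoulliKL {f g : ℝ → ℝ} {s : Set ℝ} (hf : ContinuousOn f s)
    (hg : ContinuousOn g s) (hgs : ∀ x ∈ s, g x ∈ Ioo 0 1) :
    ContinuousOn (fun x => bernoulliKL (f x) (g x)) s := by
  have hf₁ : ContinuousOn (fun x => 1 - f x) s := continuousOn_const.sub hf
  have hg₁ : ContinuousOn (fun x => 1 - g x) s := continuousOn_const.sub hg
  refine (((continuous_mul_log.comp_continuousOn hf).sub (hf.mul (hg.log fun x hx => ?_))).add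
    (continuous_mul_log.comp_continuousOn hf₁)).sub (hf₁.mul (hg₁.log fun x hx => ?_))
  · exact (hgs x hx).1.ne'
  · linarith [(hgs x hx).2]

lemma bernoulliKL_add_le_sub {p x : ℝ} (hp : 0 < p) (hp2 : p ≤ 1 / 2) (hx : 0 ≤ x)
    (hxp : x ≤ p) : bernoulliKL (p + x) p ≤ bernoulliKL (p - x) p := by
  have hpIoo : p ∈ Ioo 0 1 := ⟨hp, by linarith⟩
  have h1p : 0 < 1 - p := by linarith
  suffices MonotoneOn (fun z => bernoulliKL (p - z) p - bernoulliKL (p + z) p) (Icc 0 x) by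
    have := this (left_mem_Icc.2 hx) (right_mem_Icc.2 hx) hx
    simp only [sub_zero, add_zero, sub_self] at this
    linarith
  refine monotoneOn_of_hasDerivWithinAt_nonneg (convex_Icc 0 x)
    ((continuousOn_const.sub continuousOn_id).bernoulliKL continuousOn_const (fun _ _ => hpIoo)
      |>.sub ((continuousOn_const.add continuousOn_id).bernoulliKL continuousOn_const
        (fun _ _ => hpIoo)))
    (f' := fun z => log ((1 - (p - z)) / (1 - p) * ((1 - (p + z)) / (1 - p)))
      - log ((p - z) / p * ((p + z) / p)))
    (fun z hz => ?_) (fun z hz => ?_)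
  all_goals
    rw [interior_Icc] at hz
    obtain ⟨hz0, hzx⟩ := hz
  · have h₁ := ((hasDerivAt_id z).const_sub p).bernoulliKL (hasDerivAt_const z p)
      ⟨by simp; linarith, by simp; linarith⟩ hpIoo
    have h₂ := ((hasDerivAt_id z).const_add p).bernoulliKL (hasDerivAt_const z p)
      ⟨by simp; linarith, by simp; linarith⟩ hpIoo
    rw [interior_Icc]
    refine (h₁.sub h₂).hasDerivWithinAt.congr_deriv ?_
    rw [log_mul (div_pos (by linarith) h1p).ne' (div_pos (by linarith) h1p).ne',
      log_mul (div_pos (by linarith) hp).ne' (by positivity)]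
    simp only [id]
    ring
  · have hz1 : z / (1 - p) ≤ z / p := div_le_div_of_nonneg_left hz0.le hp (by linarith)
    have hpz : 0 < p - z := by linarith
    rw [sub_nonneg]
    refine log_le_log (by positivity) ?_
    calc (p - z) / p * ((p + z) / p) = 1 - (z / p) ^ 2 := by field_simp; ring
      _ ≤ 1 - (z / (1 - p)) ^ 2 := by gcongr
      _ = _ := by field_simp; ring

lemma bernoulliKL_add_le_of_le {a x y : ℝ} (ha : 0 < a) (hx : 0 < x) (hxy : x ≤ y)
    (hy : y + a ≤ 1 / 2) : bernoulliKL (y + a) y ≤ bernoulliKL (x + a) x := by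
  have hIoo : ∀ m ∈ Icc x y, m ∈ Ioo 0 1 ∧ m + a ∈ Ioo 0 1 := fun m ⟨hxm, hmy⟩ =>
    ⟨⟨by linarith, by linarith⟩, ⟨by linarith, by linarith⟩⟩
  have hderiv : ∀ m ∈ Icc x y, HasDerivAt (fun m => bernoulliKL (m + a) m)
      (log ((m + a) / m) + log ((1 - m) / (1 - (m + a)))
        + ((1 - m) / (1 - (m + a)))⁻¹ - (m + a) / m) m := fun m hm => by
    refine (((hasDerivAt_id m).add_const a).bernoulliKL (hasDerivAt_id m) (hIoo m hm).2
      (hIoo m hm).1).congr_deriv ?_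
    simp only [id, one_mul]
    rw [← inv_div (1 - m) (1 - (m + a)), log_inv]
    ring
  refine antitoneOn_of_hasDerivWithinAt_nonpos (convex_Icc x y)
    (fun m hm => (hderiv m hm).continuousAt.continuousWithinAt)
    (fun m hm => (hderiv m (interior_subset hm)).hasDerivWithinAt)
    (fun m hm => ?_) (left_mem_Icc.2 hxy) (right_mem_Icc.2 hxy) hxy
  rw [interior_Icc] at hm
  obtain ⟨hxm, hmy⟩ := hm
  have hm0 : 0 < m := by linarith
  have h1 : 0 < 1 - (m + a) := by linarith
  have hv : 1 ≤ (1 - m) / (1 - (m + a)) := by rw [one_le_div h1]; linarith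
  have hvu : (1 - m) / (1 - (m + a)) ≤ (m + a) / m := by
    rw [div_le_div_iff₀ h1 hm0]; nlinarith
  linarith [log_add_log_le_sub_inv hv hvu]

lemma bernoulliKL_mul_le_of_le {r x y : ℝ} (hr : 0 < r) (hx : 0 < x) (hxy : x ≤ y) (hy : y < 1)
    (hry : r * y ≤ 1) : bernoulliKL (r * x) x ≤ bernoulliKL (r * y) y := by
  have hIoo : ∀ z ∈ Icc x y, z ∈ Ioo 0 1 := fun z ⟨hxz, hzy⟩ => ⟨by linarith, by linarith⟩
  refine monotoneOn_of_hasDerivWithinAt_nonneg (convex_Icc x y)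
    ((continuousOn_const.mul continuousOn_id).bernoulliKL continuousOn_id hIoo)
    (f' := fun z => (1 - r * z) / (1 - z) * InformationTheory.klFun (r / ((1 - r * z) / (1 - z))))
    (fun z hz => ?_) (fun z hz => ?_) (left_mem_Icc.2 hxy) (right_mem_Icc.2 hxy) hxy
  all_goals
    rw [interior_Icc] at hz
    obtain ⟨hxz, hzy⟩ := hz
    have hz1 : 0 < 1 - z := by linarith
    have hrz : r * z < 1 := by nlinarith
    have hw : 0 < (1 - r * z) / (1 - z) := div_pos (by linarith) hz1
  · refine (((hasDerivAt_id z).const_mul r).bernoulliKL (hasDerivAt_id z)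
      ⟨by simp; nlinarith, by simpa using hrz⟩ ⟨by simp; linarith, by simpa using hzy.trans hy⟩
      ).hasDerivWithinAt.congr_deriv ?_
    simp only [id, mul_one, one_mul, InformationTheory.klFun]
    rw [mul_div_cancel_right₀ r (by linarith : z ≠ 0), log_div hr.ne' hw.ne']
    generalize (1 - r * z) / (1 - z) = w at hw ⊢
    field_simp
    ring
  · exact mul_nonneg hw.le (InformationTheory.klFun_nonneg (div_pos hr hw).le)

section Threshold

variable {p r μ : ℝ} (hp : 0 < p) (hr : 0 < r) (hpr : (1 + r) * p ≤ 1 / 2) (hμ : μ ∈ Ioo 0 1)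
include hp hr hpr hμ

lemma bernoulliKL_le_add_mul_max (h : μ + r * max p μ ≤ 1) :
    bernoulliKL ((1 + r) * p) p ≤ bernoulliKL (μ + r * max p μ) μ := by
  rcases le_total μ p with hμp | hpμ
  · rw [max_eq_left hμp, show (1 + r) * p = p + r * p by ring]
    exact bernoulliKL_add_le_of_le (by positivity) hμ.1 hμp (by linarith)
  · rw [max_eq_right hpμ, show μ + r * μ = (1 + r) * μ by ring] at h ⊢
    exact bernoulliKL_mul_le_of_le (by linarith) hp hpμ hμ.2 h

lemma bernoulliKL_le_sub_mul_max (hr1 : r < 1) (h : 0 ≤ μ - r * max p μ) :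
    bernoulliKL ((1 + r) * p) p ≤ bernoulliKL (μ - r * max p μ) μ := by
  rcases le_total μ p with hμp | hpμ
  · rw [max_eq_left hμp] at h ⊢
    calc bernoulliKL ((1 + r) * p) p = bernoulliKL (p + r * p) p := by ring_nf
      _ ≤ bernoulliKL (μ + r * p) μ :=
        bernoulliKL_add_le_of_le (by positivity) hμ.1 hμp (by linarith)
      _ ≤ bernoulliKL (μ - r * p) μ :=
        bernoulliKL_add_le_sub hμ.1 (by nlinarith) (by positivity) (by linarith)
  · rw [max_eq_right hpμ]
    calc bernoulliKL ((1 + r) * p) p = bernoulliKL (p + r * p) p := by ring_nf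
      _ ≤ bernoulliKL (p - r * p) p :=
        bernoulliKL_add_le_sub hp (by nlinarith) (by positivity) (by nlinarith)
      _ = bernoulliKL ((1 - r) * p) p := by ring_nf
      _ ≤ bernoulliKL ((1 - r) * μ) μ :=
        bernoulliKL_mul_le_of_le (by linarith) hp hpμ hμ.2 (by nlinarith [hμ.2])
      _ = bernoulliKL (μ - r * μ) μ := by ring_nf

end Threshold

lemma mul_bernoulliKL_eq {a r : ℝ} (ha : 0 < a) (hr : 0 < r) (h : a / r + a < 1) :
    r * bernoulliKL ((1 + r) * (a / r)) (a / r)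
      = (a + a * r) * log (1 + r) + (r - a - a * r) * log (1 - a * r / (r - a)) := by
  have hp1 : a / r < 1 := by linarith
  have har : a < r := by rwa [div_lt_one hr] at hp1
  have har' : r - a ≠ 0 := by linarith
  have hrp : (1 + r) * (a / r) = a / r + a := by field_simp
  rw [bernoulliKL_eq_of_mem_Ioo ⟨by positivity, by linarith⟩ ⟨by positivity, hp1⟩,
    show (1 + r) * (a / r) / (a / r) = 1 + r by field_simp,
    show (1 - (1 + r) * (a / r)) / (1 - a / r) = 1 - a * r / (r - a) by field_simp; ring]
  field_simp
  ring

lemma exists_exp_neg_mul_mul_eq_exp_neg_bernoulliKL {a p : ℝ} (hp : p ∈ Ioo 0 1) (hpa : p ≤ a)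
    (ha : a < 1) : ∃ s, 0 ≤ s ∧ exp (-s * a) * (1 - p + p * exp s) = exp (-bernoulliKL a p) := by
  obtain ⟨hp0, hp1⟩ := hp
  have ha0 : 0 < a := hp0.trans_le hpa
  have h1a : 0 < 1 - a := by linarith
  have h1p : 0 < 1 - p := by linarith
  refine ⟨log (a * (1 - p) / ((1 - a) * p)), log_nonneg ?_, ?_⟩
  · rw [one_le_div (by positivity)]
    nlinarith
  · have hB : 1 - p + p * (a * (1 - p) / ((1 - a) * p)) = exp (log ((1 - p) / (1 - a))) := by
      rw [exp_log (by positivity)]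
      field_simp
      ring
    rw [exp_log (by positivity), hB, ← exp_add, bernoulliKL,
      log_div (by positivity) (by positivity), log_mul ha0.ne' h1p.ne', log_mul h1a.ne' hp0.ne', log_div h1p.ne' h1a.ne']
    ring_nf

/-- At `a = 1` the Chernoff bound of `exists_exp_neg_mul_mul_eq_exp_neg_bernoulliKL` is only
approached, as `s → ∞`. -/
lemma tendsto_exp_neg_mul_one_sub_add_mul_exp {p : ℝ} (hp : 0 < p) :
    Tendsto (fun s => exp (-s * 1) * (1 - p + p * exp s)) atTop (𝓝 (exp (-bernoulliKL 1 p))) := by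
  have hlim : exp (-bernoulliKL 1 p) = (1 - p) * 0 + p := by
    simp [bernoulliKL, exp_log hp]
  have hfun : (fun s => exp (-s * 1) * (1 - p + p * exp s)) = fun s => (1 - p) * exp (-s) + p := by
    funext s
    rw [mul_one, exp_neg]
    field_simp
  rw [hlim, hfun]
  exact (tendsto_exp_neg_atTop_nhds_zero.const_mul _).add_const p

lemma two_mul_exp_neg_lt {δ x : ℝ} (hδ : 0 < δ) (hx : log (2 / δ) < x) : 2 * exp (-x) < δ := by
  have : exp (-x) < δ / 2 :=
    calc _ < exp (-log (2 / δ)) := exp_lt_exp.2 (neg_lt_neg hx)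
      _ = δ / 2 := by rw [exp_neg, exp_log (by positivity), inv_div]
  linarith

section Chernoff

variable {Ω ι : Type*} [MeasurableSpace Ω] {P : Measure Ω} [IsProbabilityMeasure P]

lemma mgf_le_of_mem_Icc_zero_one {Y : Ω → ℝ} (hY : Measurable Y) (hb : ∀ ω, Y ω ∈ Icc 0 1)
    (s : ℝ) : mgf Y P s ≤ 1 - P[Y] + P[Y] * exp s := by
  have hYint : Integrable Y P := .of_mem_Icc 0 1 hY.aemeasurable (ae_of_all _ hb)
  have h1Yint : Integrable (fun ω => 1 - Y ω) P := (integrable_const 1).sub hYint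
  have hconv : ∀ ω, exp (s * Y ω) ≤ 1 - Y ω + Y ω * exp s := fun ω => by
    obtain ⟨h0, h1⟩ := hb ω
    have := convexOn_exp.2 (mem_univ 0) (mem_univ s) (by linarith : 0 ≤ 1 - Y ω) h0 (by ring)
    simp only [smul_eq_mul, mul_zero, zero_add, exp_zero, mul_one] at this
    rw [mul_comm s]
    exact this
  calc mgf Y P s ≤ ∫ ω, (1 - Y ω + Y ω * exp s) ∂P :=
        integral_mono (integrable_exp_mul_of_mem_Icc hY.aemeasurable (ae_of_all _ hb))
          (h1Yint.add (hYint.mul_const _)) hconv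
    _ = 1 - P[Y] + P[Y] * exp s := by
        rw [integral_add h1Yint (hYint.mul_const _),
          integral_sub (integrable_const 1) hYint, integral_mul_const]
        simp

variable [Fintype ι] {X : ι → Ω → ℝ} {p : ℝ} (hmeas : ∀ i, Measurable (X i))
  (hindep : iIndepFun X P) (hbound : ∀ i ω, X i ω ∈ Icc 0 1) (hmean : ∀ i, P[X i] = p)
include hmeas hindep hbound hmean

lemma measureReal_card_mul_le_sum_le_pow (a : ℝ) {s : ℝ} (hs : 0 ≤ s) :
    P.real {ω | Fintype.card ι * a ≤ ∑ i, X i ω}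
      ≤ (exp (-s * a) * (1 - p + p * exp s)) ^ Fintype.card ι := by
  have hS : ∀ ω, (∑ i, X i) ω ≤ Fintype.card ι := fun ω => by
    rw [Finset.sum_apply]
    exact (Finset.sum_le_sum fun i _ => (hbound i ω).2).trans (by simp)
  have hint := integrable_exp_mul_of_le (μ := P) s _ hs (by fun_prop) (ae_of_all _ hS)
  have hchernoff := measure_ge_le_exp_mul_mgf (Fintype.card ι * a) hs hint
  simp only [Finset.sum_apply] at hchernoff
  calc _ ≤ exp (-s * (Fintype.card ι * a)) * mgf (∑ i, X i) P s := hchernoff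
    _ = exp (-s * (Fintype.card ι * a)) * ∏ i, mgf (X i) P s := by rw [hindep.mgf_sum hmeas]
    _ ≤ exp (-s * (Fintype.card ι * a)) * ∏ _i : ι, (1 - p + p * exp s) := by
        gcongr with i
        · exact fun i _ => mgf_nonneg
        · simpa [hmean i] using mgf_le_of_mem_Icc_zero_one (P := P) (hmeas i) (hbound i) s
    _ = _ := by
        rw [Finset.prod_const, Finset.card_univ, mul_pow, ← exp_nat_mul]
        ring_nf

lemma measureReal_card_mul_le_sum_le_exp (hp : p ∈ Ioo 0 1) {a : ℝ} (hpa : p ≤ a) (ha : a ≤ 1) :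
    P.real {ω | Fintype.card ι * a ≤ ∑ i, X i ω}
      ≤ exp (-(Fintype.card ι * bernoulliKL a p)) := by
  rw [show -(Fintype.card ι * bernoulliKL a p) = Fintype.card ι * -bernoulliKL a p by ring,
    exp_nat_mul]
  rcases ha.lt_or_eq with ha | rfl
  · obtain ⟨s, hs, heq⟩ := exists_exp_neg_mul_mul_eq_exp_neg_bernoulliKL hp hpa ha
    rw [← heq]
    exact measureReal_card_mul_le_sum_le_pow hmeas hindep hbound hmean a hs
  · exact ge_of_tendsto ((tendsto_exp_neg_mul_one_sub_add_mul_exp hp.1).pow _)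
      (eventually_atTop.2 ⟨0, fun s hs =>
        measureReal_card_mul_le_sum_le_pow hmeas hindep hbound hmean 1 hs⟩)

lemma measureReal_sum_le_card_mul_le_exp (hp : p ∈ Ioo 0 1) {b : ℝ} (hb : 0 ≤ b) (hbp : b ≤ p) :
    P.real {ω | ∑ i, X i ω ≤ Fintype.card ι * b}
      ≤ exp (-(Fintype.card ι * bernoulliKL b p)) := by
  have hYmean : ∀ i, ∫ ω, 1 - X i ω ∂P = 1 - p := fun i => by
    rw [integral_sub (integrable_const 1)
      (.of_mem_Icc 0 1 (hmeas i).aemeasurable (ae_of_all _ (hbound i))), hmean i]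
    simp
  have hY := measureReal_card_mul_le_sum_le_exp (X := fun i ω => 1 - X i ω)
    (fun i => measurable_const.sub (hmeas i))
    (hindep.comp (fun _ x => 1 - x) fun _ => measurable_const.sub measurable_id)
    (fun i ω => ⟨by linarith [(hbound i ω).2], by linarith [(hbound i ω).1]⟩) hYmean
    ⟨by linarith [hp.2], by linarith [hp.1]⟩ (a := 1 - b) (by linarith) (by linarith)
  rw [bernoulliKL_one_sub_one_sub] at hY
  convert hY using 3
  ext ω
  simp only [Finset.sum_sub_distrib, Finset.sum_const, Finset.card_univ,
    nsmul_eq_mul, mul_one]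
  constructor <;> intro h <;> linarith

lemma measureReal_le_abs_sub_le [Nonempty ι] (hp : p ∈ Ioo 0 1) {t K : ℝ} (ht : 0 ≤ t)
    (hup : p + t ≤ 1 → K ≤ bernoulliKL (p + t) p) (hlo : 0 ≤ p - t → K ≤ bernoulliKL (p - t) p) :
    P.real {ω | t ≤ |(∑ i, X i ω) / Fintype.card ι - p|} ≤ 2 * exp (-(Fintype.card ι * K)) := by
  set m : ℝ := (Fintype.card ι : ℝ)
  have hm : 0 < m := by positivity
  have hsub : {ω | t ≤ |(∑ i, X i ω) / m - p|}
      ⊆ {ω | m * (p + t) ≤ ∑ i, X i ω} ∪ {ω | ∑ i, X i ω ≤ m * (p - t)} :=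
      fun ω (hω : t ≤ |(∑ i, X i ω) / m - p|) => by
    rcases le_abs.1 hω with h | h
    · left
      rw [le_sub_iff_add_le, le_div_iff₀ hm] at h
      exact (by linarith : m * (p + t) ≤ ∑ i, X i ω)
    · right
      rw [neg_sub, le_sub_iff_add_le, ← le_sub_iff_add_le', div_le_iff₀ hm] at h
      exact (by linarith : ∑ i, X i ω ≤ m * (p - t))
  have hupper : P.real {ω | m * (p + t) ≤ ∑ i, X i ω} ≤ exp (-(m * K)) := by
    by_cases h : p + t ≤ 1
    · refine (measureReal_card_mul_le_sum_le_exp hmeas hindep hbound hmean hp (by linarith) h).trans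
        (exp_le_exp.2 (neg_le_neg (mul_le_mul_of_nonneg_left (hup h) hm.le)))
    · have hS : ∀ ω, ∑ i, X i ω ≤ m := fun ω =>
        (Finset.sum_le_sum fun i _ => (hbound i ω).2).trans (by simp [m])
      have hempty : {ω | m * (p + t) ≤ ∑ i, X i ω} = ∅ :=
        eq_empty_of_forall_notMem fun ω (hω : m * (p + t) ≤ _) => by nlinarith [hS ω]
      rw [hempty, measureReal_empty]
      positivity
  have hlower : P.real {ω | ∑ i, X i ω ≤ m * (p - t)} ≤ exp (-(m * K)) := by
    by_cases h : 0 ≤ p - t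
    · refine (measureReal_sum_le_card_mul_le_exp hmeas hindep hbound hmean hp h
        (by linarith)).trans (exp_le_exp.2 (neg_le_neg (mul_le_mul_of_nonneg_left (hlo h) hm.le)))
    · have hS : ∀ ω, 0 ≤ ∑ i, X i ω := fun ω => Finset.sum_nonneg fun i _ => (hbound i ω).1
      have hempty : {ω | ∑ i, X i ω ≤ m * (p - t)} = ∅ :=
        eq_empty_of_forall_notMem fun ω (hω : _ ≤ m * (p - t)) => by nlinarith [hS ω]
      rw [hempty, measureReal_empty]
      positivity
  calc _ ≤ _ := measureReal_mono hsub
    _ ≤ _ := measureReal_union_le _ _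
    _ ≤ _ := by linarith

end Chernoff

theorem stmt_18_general (εa εr : ℝ) (hεa : 0 < εa) (hεr : 0 < εr) (hεr1 : εr < 1)
    (hc : εa / εr + εa ≤ 1 / 2) (δ : ℝ) (hδ : 0 < δ) (hδ1 : δ < 1)
    {Ω : Type*} [MeasurableSpace Ω] (P : Measure Ω) [IsProbabilityMeasure P]
    (n : ℕ) (hn : 0 < n) (X : Fin n → Ω → ℝ)
    (hmeas : ∀ i, Measurable (X i))
    (hindep : iIndepFun X P)
    (hbound : ∀ i ω, X i ω ∈ Set.Icc (0 : ℝ) 1)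
    (μ : ℝ) (hμ : μ ∈ Set.Ioo (0 : ℝ) 1) (hmean : ∀ i, ∫ ω, X i ω ∂P = μ)
    (hsize : (n : ℝ) > εr * Real.log (2 / δ) /
        ((εa + εa * εr) * Real.log (1 + εr) +
         (εr - εa - εa * εr) * Real.log (1 - εa * εr / (εr - εa)))) :
    P {ω | |(∑ i, X i ω) / n - μ| < εa ∨ |((∑ i, X i ω) / n - μ) / μ| < εr}
      > ENNReal.ofReal (1 - δ) := by
  have : Nonempty (Fin n) := ⟨⟨0, hn⟩⟩
  set p := εa / εr
  have hp : 0 < p := by positivity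
  have hεa_eq : εr * p = εa := mul_div_cancel₀ εa hεr.ne'
  have hpr : (1 + εr) * p ≤ 1 / 2 := by linarith
  have hK : 0 < bernoulliKL ((1 + εr) * p) p :=
    bernoulliKL_pos ⟨by positivity, by linarith⟩ ⟨hp, by linarith⟩ (by nlinarith)
  have hnK : log (2 / δ) < n * bernoulliKL ((1 + εr) * p) p := by
    rwa [← mul_bernoulliKL_eq hεa hεr (by linarith), mul_div_mul_left _ _ hεr.ne', gt_iff_lt,
      div_lt_iff₀ hK] at hsize
  have hfail := measureReal_le_abs_sub_le hmeas hindep hbound hmean hμ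
    (t := εr * max p μ) (by positivity) (bernoulliKL_le_add_mul_max hp hεr hpr hμ)
    (bernoulliKL_le_sub_mul_max hp hεr hpr hμ hεr1)
  rw [Fintype.card_fin] at hfail
  have hsucc : {ω | εr * max p μ ≤ |(∑ i, X i ω) / n - μ|}ᶜ
      ⊆ {ω | |(∑ i, X i ω) / n - μ| < εa ∨ |((∑ i, X i ω) / n - μ) / μ| < εr} :=
    fun ω hω => by
      have h : |(∑ i, X i ω) / n - μ| < εa ∨ |(∑ i, X i ω) / n - μ| < εr * μ := by
        rw [← lt_max_iff, ← hεa_eq, ← mul_max_of_nonneg _ _ hεr.le]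
        exact not_le.1 hω
      exact h.imp_right fun h => by rwa [abs_div, abs_of_pos hμ.1, div_lt_iff₀ hμ.1]
  rw [gt_iff_lt, ENNReal.ofReal_lt_iff_lt_toReal (by linarith) (measure_ne_top _ _)]
  calc 1 - δ < 1 - P.real {ω | εr * max p μ ≤ |(∑ i, X i ω) / n - μ|} := by
        linarith [two_mul_exp_neg_lt hδ hnK]
    _ = P.real {ω | εr * max p μ ≤ |(∑ i, X i ω) / n - μ|}ᶜ :=
      (probReal_compl_eq_one_sub (measurableSet_le measurable_const (by fun_prop))).symm
    _ ≤ _ := measureReal_mono hsucc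

theorem stmt_18 (εa εr : ℝ) (hεa : 0 < εa) (hεa1 : εa < 1) (hεr : 0 < εr) (hεr1 : εr < 1)
    (hc : εa / εr + εa ≤ 1 / 2) (δ : ℝ) (hδ : 0 < δ) (hδ1 : δ < 1)
    {Ω : Type*} [MeasurableSpace Ω] (P : Measure Ω) [IsProbabilityMeasure P]
    (n : ℕ) (hn : 0 < n) (X : Fin n → Ω → ℝ)
    (hmeas : ∀ i, Measurable (X i))
    (hindep : iIndepFun X P)
    (hident : ∀ i j, IdentDistrib (X i) (X j) P P)
    (hbound : ∀ i ω, X i ω ∈ Set.Icc (0 : ℝ) 1)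
    (μ : ℝ) (hμ : μ ∈ Set.Ioo (0 : ℝ) 1) (hmean : ∀ i, ∫ ω, X i ω ∂P = μ)
    (hsize : (n : ℝ) > εr * Real.log (2 / δ) /
        ((εa + εa * εr) * Real.log (1 + εr) +
         (εr - εa - εa * εr) * Real.log (1 - εa * εr / (εr - εa)))) :
    P {ω | |(∑ i, X i ω) / n - μ| < εa ∨ |((∑ i, X i ω) / n - μ) / μ| < εr}
      > ENNReal.ofReal (1 - δ) :=
  stmt_18_general εa εr hεa hεr hεr1 hc δ hδ hδ1 P n hn X hmeas hindep hbound μ hμ hmean hsize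
end
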